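/- Let (s,t) be an edge with s<t. Suppose an execution contains configurations L_0 and L_1 with L_0 ↦* L_1 such that: t executes at least one s-rule in some transition occurring before L_0; r_{ts} = (Idle,0) in L_0; and (p_t, m_t) = (s,1) in L_1. Then t executes an s-Increase that sets m_t to 1 in some transition occurring between L_0 and L_1. -/
import Mathlib


/-!
Formal model of the self-stabilizing maximal-matching algorithm in the
link-register model under read/write atomicity.

Nodes form a finite simple graph `G` on a vertex type `V` whose linear order
plays the role of the distinct identifiers.  A configuration records, for each
node `u`, its pointer `p u : Option V` (`none` = null), its lock variable
`m u : Fin 3`, and for each (directed) link a register `r u v : RegFlag × Fin 3`.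
-/

inductive RegFlag where
  | Idle | You | Other
deriving DecidableEq

abbrev RegVal : Type := RegFlag × Fin 3

inductive Rule (V : Type) where
  | write (a : V)
  | seduction (a : V)
  | marriage (a : V)
  | increase
  | reset
deriving DecidableEq

structure Config (V : Type) where
  p : V → Option V
  m : V → Fin 3
  r : V → V → RegVal

variable {V : Type}

def correctRegisterValue [DecidableEq V] (C : Config V) (u a : V) : RegVal :=
  match C.p u with
  | none => (RegFlag.Idle, 0)
  | some b => if b = a then (RegFlag.You, C.m u) else (RegFlag.Other, C.m u)

def PRabandonment [LinearOrder V] (C : Config V) (u : V) : Prop :=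
  ∃ v, C.p u = some v ∧
    (((C.r v u).1 ≠ RegFlag.You ∧ (v < u ∨ C.m u ≠ 0)) ∨
     (C.r v u = (RegFlag.Other, 2) ∧ u < v))

def PRreset [LinearOrder V] (C : Config V) (u : V) : Prop :=
  ∃ v, C.p u = some v ∧ (C.r v u).1 = RegFlag.You ∧
    ((C.m u = 0 ∧ (C.r v u).2 = 2) ∨
     (C.m u = 2 ∧ (C.r v u).2 = 0) ∨
     (C.m u = 0 ∧ (C.r v u).2 = 1 ∧ v < u) ∨
     (C.m u = 1 ∧ (C.r v u).2 = 0 ∧ u < v) ∨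
     (C.m u = 1 ∧ (C.r v u).2 = 2 ∧ u < v) ∨
     (C.m u = 2 ∧ (C.r v u).2 = 1 ∧ v < u))

/-- The guard of each rule of node `u` in configuration `C`. -/
def eligible [LinearOrder V] (G : SimpleGraph V) (C : Config V) (u : V) : Rule V → Prop
  | .write a => G.Adj u a ∧ C.r u a ≠ correctRegisterValue C u a
  | .seduction a => G.Adj u a ∧ C.p u = none ∧ C.r u a = correctRegisterValue C u a ∧
      C.r a u = (RegFlag.Idle, 0) ∧ u < a
  | .marriage a => G.Adj u a ∧ C.p u = none ∧ C.r u a = correctRegisterValue C u a ∧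
      C.r a u = (RegFlag.You, 0) ∧ a < u
  | .increase => ∃ v, C.p u = some v ∧ C.r u v = correctRegisterValue C u v ∧
      (C.r v u).1 = RegFlag.You ∧
      ((C.m u = 0 ∧ ((u < v ∧ (C.r v u).2 = 1) ∨ (v < u ∧ (C.r v u).2 = 0))) ∨
       (C.m u = 1 ∧ ((u < v ∧ (C.r v u).2 = 1) ∨ (v < u ∧ (C.r v u).2 = 2))))
  | .reset => ∃ v, C.p u = some v ∧ C.r u v = correctRegisterValue C u v ∧
      (PRabandonment C u ∨ PRreset C u)

/-- Simultaneous application of (at most) one rule per node.  `A u = some R`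
means node `u` executes rule `R`; each action only modifies the data owned by
the acting node. -/
def step [DecidableEq V] (C : Config V) (A : V → Option (Rule V)) : Config V where
  p u :=
    match A u with
    | some (Rule.seduction a) => some a
    | some (Rule.marriage a) => some a
    | some Rule.reset => none
    | _ => C.p u
  m u :=
    match A u with
    | some (Rule.seduction _) => 0
    | some (Rule.marriage _) => 0
    | some Rule.reset => 0
    | some Rule.increase => C.m u + 1
    | _ => C.m u
  r u a :=
    match A u with
    | some (Rule.write b) => if a = b then correctRegisterValue C u a else C.r u a
    | _ => C.r u a

/-- An execution `C_0, A_0, C_1, A_1, …, C_T`: at each transition `i < T`, a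
nonempty set of eligible rules (at most one per node) is executed
simultaneously. -/
structure Execution [LinearOrder V] (G : SimpleGraph V) where
  T : ℕ
  conf : ℕ → Config V
  act : ℕ → V → Option (Rule V)
  act_nonempty : ∀ i < T, ∃ u, (act i u).isSome
  act_eligible : ∀ i < T, ∀ u R, act i u = some R → eligible G (conf i) u R
  conf_succ : ∀ i < T, conf (i + 1) = step (conf i) (act i)

/-- A configuration is stable if no rule is eligible at any node. -/
def stableConfig [LinearOrder V] (G : SimpleGraph V) (C : Config V) : Prop :=
  ∀ u R, ¬ eligible G C u R

/-- The edge `(s,t)` (with `s < t` intended) is in state `(You, α, β)`. -/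
def edgeState (C : Config V) (s t : V) (α β : Fin 3) : Prop :=
  C.p s = some t ∧ C.p t = some s ∧ C.m s = α ∧ C.m t = β

def updatedCorrectState (C : Config V) (s t : V) (α β : Fin 3) : Prop :=
  edgeState C s t α β ∧ C.r s t = (RegFlag.You, α) ∧ C.r t s = (RegFlag.You, β) ∧
    ((α, β) = ((0 : Fin 3), (0 : Fin 3)) ∨ (α, β) = (0, 1) ∨ (α, β) = (1, 1) ∨
     (α, β) = (2, 1) ∨ (α, β) = (2, 2))

def toUpdateCorrectState (C : Config V) (s t : V) (α β : Fin 3) : Prop :=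
  edgeState C s t α β ∧
    ((((α, β) = ((0 : Fin 3), (1 : Fin 3)) ∨ (α, β) = (2, 2)) ∧
        C.r s t = (RegFlag.You, α) ∧ C.r t s = (RegFlag.You, β - 1)) ∨
     (((α, β) = ((1 : Fin 3), (1 : Fin 3)) ∨ (α, β) = (2, 1)) ∧
        C.r s t = (RegFlag.You, α - 1) ∧ C.r t s = (RegFlag.You, β)))

def correctState (C : Config V) (s t : V) (α β : Fin 3) : Prop :=
  updatedCorrectState C s t α β ∨ toUpdateCorrectState C s t α β

/-- Node `u` executes a `v`-rule in transition `k`: one of `Write(v)`,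
`Seduction(v)`, `Marriage(v)`, a `v`-`Increase` or a `v`-`Reset`. -/
def execVRule [LinearOrder V] {G : SimpleGraph V} (E : Execution G) (k : ℕ) (u v : V) : Prop :=
  k < E.T ∧
    (E.act k u = some (Rule.write v) ∨ E.act k u = some (Rule.seduction v) ∨
     E.act k u = some (Rule.marriage v) ∨
     ((E.act k u = some Rule.increase ∨ E.act k u = some Rule.reset) ∧
       (E.conf k).p u = some v))

/-- If `t` executed at least one `s`-rule before `L_0 =
conf i`, `r_{ts} = (Idle,0)` in `L_0`, and `(p_t,m_t) = (s,1)` in `L_1 = conf j`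
(with `L_0 ↦* L_1`), then `t` executes an `s`-`Increase` setting `m_t = 1`
between `L_0` and `L_1`. -/
theorem stmt_14 {V : Type} [Fintype V] [LinearOrder V] (G : SimpleGraph V)
    (s t : V) (hadj : G.Adj s t) (hst : s < t) (E : Execution G)
    (i j : ℕ) (hij : i ≤ j) (hjT : j ≤ E.T)
    (hpre : ∃ k, k + 1 ≤ i ∧ execVRule E k t s)
    (hL0 : (E.conf i).r t s = (RegFlag.Idle, 0))
    (hL1p : (E.conf j).p t = some s) (hL1m : (E.conf j).m t = 1) :
    ∃ k, i ≤ k ∧ k + 1 ≤ j ∧ E.act k t = some Rule.increase ∧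
      (E.conf k).p t = some s ∧ (E.conf (k + 1)).m t = 1 := by
  -- Invariant J k : if r_{ts} = (Idle,0) and p_t = some s at time k, then m_t = 0.
  set J : ℕ → Prop := fun k =>
    (E.conf k).r t s = (RegFlag.Idle, 0) → (E.conf k).p t = some s → (E.conf k).m t = 0
    with hJ
  -- J is preserved by every transition.
  have Jstep : ∀ k, k < E.T → J k → J (k + 1) := by
    intro k hkT hJk
    rw [hJ]
    beta_reduce
    rw [E.conf_succ k hkT]
    rcases h : E.act k t with _ | R
    · simp only [step, h]; exact hJk
    · cases R with
      | write b =>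
        simp only [step, h]
        by_cases hsb : s = b
        · simp only [if_pos hsb]
          intro hr hp
          simp [correctRegisterValue, hp] at hr
        · simp only [if_neg hsb]; exact hJk
      | seduction a => simp [step, h]
      | marriage a => simp [step, h]
      | increase =>
        simp only [step, h]
        intro hr hp
        have helig := E.act_eligible k hkT t _ h
        obtain ⟨v, hpv, hrv, _⟩ := helig
        rw [hpv] at hp
        have hvs : v = s := by injection hp
        subst hvs
        rw [hr] at hrv
        simp [correctRegisterValue, hpv] at hrv
      | reset => simp [step, h]
  -- J holds at time k0+1 right after t executes an s-rule at time k0.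
  obtain ⟨k0, hk0i, hk0T, hdisj⟩ := hpre
  have Jinit : J (k0 + 1) := by
    rw [hJ]
    beta_reduce
    rw [E.conf_succ k0 hk0T]
    rcases hdisj with h | h | h | ⟨h | h, hp0⟩
    · -- write s
      simp only [step, h, if_pos rfl]
      intro hr hp
      simp [correctRegisterValue, hp] at hr
    · simp [step, h]
    · simp [step, h]
    · -- increase with p_t = some s: register is (You, _), contradiction
      simp only [step, h]
      intro hr _
      have helig := E.act_eligible k0 hk0T t _ h
      obtain ⟨v, hpv, hrv, _⟩ := helig
      rw [hp0] at hpv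
      have hvs : s = v := by injection hpv
      subst hvs
      rw [hr] at hrv
      simp [correctRegisterValue, hp0] at hrv
    · simp [step, h]
  -- propagate J up to time i
  have Ji : J i := by
    have key : ∀ k, k0 + 1 ≤ k → k ≤ i → J k := by
      intro k hk
      induction k, hk using Nat.le_induction with
      | base => intro _; exact Jinit
      | succ k hk ih =>
        intro hki
        have hk' : k < E.T := lt_of_lt_of_le (lt_of_lt_of_le (Nat.lt_succ_self k) hki)
          (le_trans hij hjT)
        exact Jstep k hk' (ih (le_of_lt (Nat.lt_of_succ_le hki)))
    exact key i hk0i le_rfl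
  -- forward induction: either a witnessing increase exists, or (p_t,m_t)=(s,1) at i
  have up : ∀ k, i ≤ k → k ≤ j →
      (E.conf k).p t = some s → (E.conf k).m t = 1 →
      (∃ k', i ≤ k' ∧ k' + 1 ≤ j ∧ E.act k' t = some Rule.increase ∧
        (E.conf k').p t = some s ∧ (E.conf (k' + 1)).m t = 1) ∨
      ((E.conf i).p t = some s ∧ (E.conf i).m t = 1) := by
    intro k hik
    induction k, hik using Nat.le_induction with
    | base => intro _ hp hm; exact Or.inr ⟨hp, hm⟩
    | succ k hik ih =>
      intro hkj hp hm
      have hkT : k < E.T := lt_of_lt_of_le (Nat.lt_of_succ_le hkj) hjT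
      have hkj' : k ≤ j := le_of_lt (Nat.lt_of_succ_le hkj)
      rw [E.conf_succ k hkT] at hp hm
      rcases h : E.act k t with _ | R
      · simp only [step, h] at hp hm
        exact ih hkj' hp hm
      · cases R with
        | write b =>
          simp only [step, h] at hp hm
          exact ih hkj' hp hm
        | seduction a => simp only [step, h] at hm; exact absurd hm (by decide)
        | marriage a => simp only [step, h] at hm; exact absurd hm (by decide)
        | increase =>
          simp only [step, h] at hp hm
          refine Or.inl ⟨k, hik, hkj, h, hp, ?_⟩
          rw [E.conf_succ k hkT]
          simp only [step, h]
          exact hm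
        | reset => simp only [step, h] at hp; exact absurd hp (by simp)
  rcases up j hij le_rfl hL1p hL1m with h | ⟨hp, hm⟩
  · exact h
  · have := Ji hL0 hp
    rw [this] at hm
    exact absurd hm (by decide)
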